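/- arXiv:2508.06061 — 2 statements merged into one kernel-verified Lean document; each statement's English description precedes it below -/
import Mathlib

section
/- Let E be a real normed vector space, let (β_n) be nonnegative reals, and let (θ_n), (θ*_n) in E satisfy θ_{n+1} = θ_n + β_n • (ρ_n · δ_n) • Ψ_n and θ*_{n+1} = θ*_n + β_n • (ρ*_n · δ*_n) • Ψ*_n with θ_0 = θ*_0, where ρ_n, ρ*_n, δ_n, δ*_n ∈ ℝ and Ψ_n, Ψ*_n ∈ E. Assume for all i: |ρ*_i − ρ_i| ≤ a_i, |ρ_i| ≤ ρ_max, |δ*_i| ≤ B*, |δ_i| ≤ B, |δ*_i − δ_i| ≤ Λ_i, ‖Ψ*_i‖ ≤ E₀, and ‖Ψ*_i − Ψ_i‖ ≤ m_i. Then for every n, ‖θ*_{n+1} − θ_{n+1}‖ ≤ ∑_{i=0}^{n} β_i (a_i B* E₀ + ρ_max Λ_i E₀ + ρ_max B m_i). -/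
theorem actor_error_recursion_bound
    (E : Type*) [NormedAddCommGroup E] [NormedSpace ℝ E]
    (β : ℕ → ℝ) (hβ : ∀ n, 0 ≤ β n)
    (ρ ρstar δ δstar : ℕ → ℝ) (Ψ Ψstar : ℕ → E)
    (θ θstar : ℕ → E) (h0 : θ 0 = θstar 0)
    (hθ : ∀ n, θ (n + 1) = θ n + β n • ((ρ n * δ n) • Ψ n))
    (hθstar : ∀ n, θstar (n + 1) = θstar n + β n • ((ρstar n * δstar n) • Ψstar n))
    (a : ℕ → ℝ) (ρmax Bstar B E₀ : ℝ) (Λ m : ℕ → ℝ)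
    (ha : ∀ i, |ρstar i - ρ i| ≤ a i)
    (hρ : ∀ i, |ρ i| ≤ ρmax)
    (hδstar : ∀ i, |δstar i| ≤ Bstar)
    (hδ : ∀ i, |δ i| ≤ B)
    (hΛ : ∀ i, |δstar i - δ i| ≤ Λ i)
    (hΨstar : ∀ i, ‖Ψstar i‖ ≤ E₀)
    (hm : ∀ i, ‖Ψstar i - Ψ i‖ ≤ m i) :
    ∀ n, ‖θstar (n + 1) - θ (n + 1)‖ ≤
      ∑ i ∈ Finset.range (n + 1),
        β i * (a i * Bstar * E₀ + ρmax * Λ i * E₀ + ρmax * B * m i) := by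
  have key : ∀ i, ‖(ρstar i * δstar i) • Ψstar i - (ρ i * δ i) • Ψ i‖ ≤
      a i * Bstar * E₀ + ρmax * Λ i * E₀ + ρmax * B * m i := by
    intro i
    have hdec : (ρstar i * δstar i) • Ψstar i - (ρ i * δ i) • Ψ i
        = ((ρstar i - ρ i) * δstar i) • Ψstar i
          + (ρ i * (δstar i - δ i)) • Ψstar i
          + (ρ i * δ i) • (Ψstar i - Ψ i) := by
      module
    rw [hdec]
    have h1 : ‖((ρstar i - ρ i) * δstar i) • Ψstar i‖ ≤ a i * Bstar * E₀ := by
      rw [norm_smul]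
      have : ‖(ρstar i - ρ i) * δstar i‖ ≤ a i * Bstar := by
        rw [Real.norm_eq_abs, abs_mul]
        exact mul_le_mul (ha i) (hδstar i) (abs_nonneg _)
          ((abs_nonneg _).trans (ha i))
      exact mul_le_mul this (hΨstar i) (norm_nonneg _)
        (mul_nonneg ((abs_nonneg _).trans (ha i)) ((abs_nonneg _).trans (hδstar i)))
    have h2 : ‖(ρ i * (δstar i - δ i)) • Ψstar i‖ ≤ ρmax * Λ i * E₀ := by
      rw [norm_smul]
      have : ‖ρ i * (δstar i - δ i)‖ ≤ ρmax * Λ i := by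
        rw [Real.norm_eq_abs, abs_mul]
        exact mul_le_mul (hρ i) (hΛ i) (abs_nonneg _) ((abs_nonneg _).trans (hρ i))
      exact mul_le_mul this (hΨstar i) (norm_nonneg _)
        (mul_nonneg ((abs_nonneg _).trans (hρ i)) ((abs_nonneg _).trans (hΛ i)))
    have h3 : ‖(ρ i * δ i) • (Ψstar i - Ψ i)‖ ≤ ρmax * B * m i := by
      rw [norm_smul]
      have : ‖ρ i * δ i‖ ≤ ρmax * B := by
        rw [Real.norm_eq_abs, abs_mul]
        exact mul_le_mul (hρ i) (hδ i) (abs_nonneg _) ((abs_nonneg _).trans (hρ i))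
      exact mul_le_mul this (hm i) (norm_nonneg _)
        (mul_nonneg ((abs_nonneg _).trans (hρ i)) ((abs_nonneg _).trans (hδ i)))
    calc ‖_ + _ + _‖ ≤ ‖((ρstar i - ρ i) * δstar i) • Ψstar i
          + (ρ i * (δstar i - δ i)) • Ψstar i‖ + ‖(ρ i * δ i) • (Ψstar i - Ψ i)‖ :=
        norm_add_le _ _
      _ ≤ ‖((ρstar i - ρ i) * δstar i) • Ψstar i‖ + ‖(ρ i * (δstar i - δ i)) • Ψstar i‖
          + ‖(ρ i * δ i) • (Ψstar i - Ψ i)‖ := by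
        gcongr; exact norm_add_le _ _
      _ ≤ _ := by linarith
  intro n
  induction n with
  | zero =>
    rw [Finset.sum_range_one]
    rw [hθ 0, hθstar 0, h0]
    have : θstar 0 + β 0 • ((ρstar 0 * δstar 0) • Ψstar 0)
        - (θstar 0 + β 0 • ((ρ 0 * δ 0) • Ψ 0))
        = β 0 • ((ρstar 0 * δstar 0) • Ψstar 0 - (ρ 0 * δ 0) • Ψ 0) := by
      rw [smul_sub]; abel
    rw [this, norm_smul, Real.norm_eq_abs, abs_of_nonneg (hβ 0)]
    exact mul_le_mul_of_nonneg_left (key 0) (hβ 0)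
  | succ n ih =>
    rw [Finset.sum_range_succ]
    rw [hθ (n+1), hθstar (n+1)]
    have heq : θstar (n+1) + β (n+1) • ((ρstar (n+1) * δstar (n+1)) • Ψstar (n+1))
        - (θ (n+1) + β (n+1) • ((ρ (n+1) * δ (n+1)) • Ψ (n+1)))
        = (θstar (n+1) - θ (n+1))
          + β (n+1) • ((ρstar (n+1) * δstar (n+1)) • Ψstar (n+1)
            - (ρ (n+1) * δ (n+1)) • Ψ (n+1)) := by
      rw [smul_sub]; abel
    rw [heq]
    calc ‖_ + _‖ ≤ ‖θstar (n+1) - θ (n+1)‖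
        + ‖β (n+1) • ((ρstar (n+1) * δstar (n+1)) • Ψstar (n+1)
            - (ρ (n+1) * δ (n+1)) • Ψ (n+1))‖ := norm_add_le _ _
      _ ≤ _ := by
        refine add_le_add ih ?_
        rw [norm_smul, Real.norm_eq_abs, abs_of_nonneg (hβ (n+1))]
        exact mul_le_mul_of_nonneg_left (key (n+1)) (hβ (n+1))
end

section
/- Let A be a nonempty finite type, Θ ≥ 0, and θ : A → EuclideanSpace ℝ (Fin S) with ‖θ a‖ ≤ Θ for all a. Define the Boltzmann log-policy L(a, μ) = ⟪μ, θ a⟫ − log(∑_{a'} exp(⟪μ, θ a'⟫)), where ⟪·,·⟫ denotes the Euclidean inner product. Then for every a ∈ A and every μ, ν ∈ EuclideanSpace ℝ (Fin S), |L(a, μ) − L(a, ν)| ≤ 2Θ ‖μ − ν‖. -/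
open Finset Real

theorem Real.log_sum_exp_le_add {ι : Type*} {s : Finset ι} (hs : s.Nonempty) {f g : ι → ℝ}
    {C : ℝ} (h : ∀ i ∈ s, f i ≤ g i + C) :
    log (∑ i ∈ s, exp (f i)) ≤ log (∑ i ∈ s, exp (g i)) + C := by
  have hg : 0 < ∑ i ∈ s, exp (g i) := sum_pos (fun i _ => exp_pos _) hs
  have hsum : ∑ i ∈ s, exp (f i) ≤ exp C * ∑ i ∈ s, exp (g i) := by
    rw [mul_sum]
    exact sum_le_sum fun i hi => by
      rw [← exp_add]
      exact exp_le_exp.2 (by linarith [h i hi])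
  calc log (∑ i ∈ s, exp (f i)) ≤ log (exp C * ∑ i ∈ s, exp (g i)) :=
        log_le_log (sum_pos (fun i _ => exp_pos _) hs) hsum
    _ = log (∑ i ∈ s, exp (g i)) + C := by
        rw [log_mul (exp_ne_zero _) hg.ne', log_exp, add_comm]

theorem Real.abs_log_sum_exp_sub_le {ι : Type*} {s : Finset ι} (hs : s.Nonempty)
    {f g : ι → ℝ} {C : ℝ} (h : ∀ i ∈ s, |f i - g i| ≤ C) :
    |log (∑ i ∈ s, exp (f i)) - log (∑ i ∈ s, exp (g i))| ≤ C := by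
  have hfg := log_sum_exp_le_add hs (f := f) (g := g) fun i hi => by
    linarith [(abs_le.1 (h i hi)).2]
  have hgf := log_sum_exp_le_add hs (f := g) (g := f) fun i hi => by
    linarith [(abs_le.1 (h i hi)).1]
  exact abs_sub_le_iff.2 ⟨by linarith, by linarith⟩

theorem abs_real_inner_sub_inner_le {E : Type*} [NormedAddCommGroup E] [InnerProductSpace ℝ E]
    (x y v : E) : |inner ℝ x v - inner ℝ y v| ≤ ‖v‖ * ‖x - y‖ := by
  rw [← inner_sub_left, mul_comm]
  exact abs_real_inner_le_norm _ _

theorem boltzmann_log_policy_lipschitz_general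
    (A : Type*) [Fintype A] (S : ℕ)
    (Θ : ℝ)
    (θ : A → EuclideanSpace ℝ (Fin S)) (hθ : ∀ a, ‖θ a‖ ≤ Θ)
    (L : A → EuclideanSpace ℝ (Fin S) → ℝ)
    (hL : ∀ a μ, L a μ = (inner ℝ μ (θ a) : ℝ) -
      Real.log (∑ a', Real.exp ((inner ℝ μ (θ a') : ℝ)))) :
    ∀ (a : A) (μ ν : EuclideanSpace ℝ (Fin S)),
      |L a μ - L a ν| ≤ 2 * Θ * ‖μ - ν‖ := by
  intro a μ ν
  have hlinear : ∀ b, |inner ℝ μ (θ b) - inner ℝ ν (θ b)| ≤ Θ * ‖μ - ν‖ := fun b =>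
    (abs_real_inner_sub_inner_le μ ν (θ b)).trans
      (mul_le_mul_of_nonneg_right (hθ b) (norm_nonneg _))
  have hnormalizer := abs_log_sum_exp_sub_le ⟨a, mem_univ a⟩ fun b _ => hlinear b
  rw [hL, hL, sub_sub_sub_comm]
  exact (abs_sub _ _).trans (by linarith [hlinear a])

theorem boltzmann_log_policy_lipschitz
    (A : Type*) [Fintype A] [Nonempty A] (S : ℕ)
    (Θ : ℝ) (hΘ : 0 ≤ Θ)
    (θ : A → EuclideanSpace ℝ (Fin S)) (hθ : ∀ a, ‖θ a‖ ≤ Θ)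
    (L : A → EuclideanSpace ℝ (Fin S) → ℝ)
    (hL : ∀ a μ, L a μ = (inner ℝ μ (θ a) : ℝ) -
      Real.log (∑ a', Real.exp ((inner ℝ μ (θ a') : ℝ)))) :
    ∀ (a : A) (μ ν : EuclideanSpace ℝ (Fin S)),
      |L a μ - L a ν| ≤ 2 * Θ * ‖μ - ν‖ :=
  boltzmann_log_policy_lipschitz_general A S Θ θ hθ L hL
end
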